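/- Let γ be the standard Gaussian measure on ℝ, let β > 0, and for each integer n and each x ≥ 0 set aₙ(x) = ∫ cosh(√(2β²x)·g)ⁿ dγ(g). Then for every x with 0 < x ≤ 1, a₁(x) − a₋₁(x) − 2β²x·a₋₁(x) + 2β²x·(2a₁(x) − a₋₁(x) − a₋₃(x) − 6β²x·a₋₃(x)) > 0. -/

import Mathlib

open MeasureTheory ProbabilityTheory Real

/-- `a β n x = ∫ cosh(√(2β²x)·g)ⁿ dγ(g)` where `γ` is the standard Gaussian measure. -/
noncomputable def gaussA (β : ℝ) (n : ℤ) (x : ℝ) : ℝ :=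
  ∫ g, (Real.cosh (Real.sqrt (2 * β ^ 2 * x) * g)) ^ n ∂(gaussianReal 0 1)

/-!
Write `t = 2β²x`. The expression equals `(1 + 2t) a₁ - (1 + 2t) a₋₁ - (t + 3t²) a₋₃` with
`a₁ = exp (t / 2)`, and it vanishes to second order at `t = 0`, so all bounds must be sharp
to that order. Pointwise, `sech y ≤ 2/9 + 2/3 e^{-y²/2} + 1/9 e^{-3y²/2}` (from a Taylor lower
bound for `cosh` and Padé lower bounds for `e^{-u}`); the Gaussian expectation of `e^{-k y²/2}`
at `y = √t g` is `(1 + kt)^{-1/2} ≤ (4 + kt) / (4 + 3kt)`. Bounding `a₁` below by its Taylor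
polynomial, the claim becomes positivity of an explicit rational function of `t`, which is
`t³` times a polynomial with positive coefficients over a positive denominator.
-/

lemma taylor_le_cosh (y : ℝ) :
    1 + y ^ 2 / 2 + y ^ 4 / 24 + y ^ 6 / 720 ≤ cosh y := by
  have h := sum_le_hasSum (Finset.range 4)
    (fun n _ => by rw [pow_mul]; positivity) (Real.hasSum_cosh y)
  simpa [Finset.sum_range_succ, Nat.factorial, add_assoc] using h

lemma pade_le_exp_neg {u : ℝ} (hu : 0 ≤ u) : (6 - 2 * u) / (6 + 4 * u + u ^ 2) ≤ exp (-u) := by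
  rw [div_le_iff₀ (by positivity)]
  let g : ℝ → ℝ := fun v => exp (-v) * (6 + 4 * v + v ^ 2) + 2 * v
  have hderiv : ∀ v, HasDerivAt g (2 - exp (-v) * (2 + 2 * v + v ^ 2)) v := by
    intro v
    have hquad : HasDerivAt (fun v => 6 + 4 * v + v ^ 2) (4 + 2 * v) v :=
      ((((hasDerivAt_id' v).const_mul 4).const_add 6).fun_add
        ((hasDerivAt_id' v).fun_pow 2)).congr_deriv (by norm_num)
    have h := ((hasDerivAt_neg v).exp.fun_mul hquad).fun_add ((hasDerivAt_id' v).const_mul 2)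
    exact h.congr_deriv (by norm_num; ring)
  have hmono : MonotoneOn g (Set.Ici 0) := by
    refine monotoneOn_of_hasDerivWithinAt_nonneg (convex_Ici 0)
      (fun v _ => (hderiv v).continuousAt.continuousWithinAt)
      (fun v _ => (hderiv v).hasDerivWithinAt) fun v hv => ?_
    rw [interior_Ici, Set.mem_Ioi] at hv
    have hexp : 1 + v + v ^ 2 / 2 ≤ exp v := quadratic_le_exp_of_nonneg hv.le
    rw [exp_neg, sub_nonneg, inv_mul_le_iff₀ (exp_pos v)]
    linarith
  have := hmono Set.self_mem_Ici (Set.mem_Ici.mpr hu) hu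
  simp only [g, neg_zero, exp_zero] at this
  linarith

lemma inv_taylor_le_pade_mixture {u : ℝ} (hu : 0 ≤ u) :
    (1 + u + u ^ 2 / 6 + u ^ 3 / 90)⁻¹ ≤
      2 / 9 + 2 / 3 * ((6 - 2 * u) / (6 + 4 * u + u ^ 2))
        + 1 / 9 * ((6 - 2 * (3 * u)) / (6 + 4 * (3 * u) + (3 * u) ^ 2)) := by
  rw [inv_le_iff_one_le_mul₀ (by positivity)]
  have key : (2 / 9 + 2 / 3 * ((6 - 2 * u) / (6 + 4 * u + u ^ 2))
        + 1 / 9 * ((6 - 2 * (3 * u)) / (6 + 4 * (3 * u) + (3 * u) ^ 2)))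
        * (1 + u + u ^ 2 / 6 + u ^ 3 / 90) - 1
      = u ^ 3 * (8 / 15 * (2 * u - 5 / 8) ^ 2 + 263 / 120 + 14 / 45 * u ^ 3 + 1 / 45 * u ^ 4)
        / ((6 + 4 * u + u ^ 2) * (6 + 4 * (3 * u) + (3 * u) ^ 2)) := by
    field_simp
    ring
  have : 0 ≤ u ^ 3 * (8 / 15 * (2 * u - 5 / 8) ^ 2 + 263 / 120 + 14 / 45 * u ^ 3 + 1 / 45 * u ^ 4)
        / ((6 + 4 * u + u ^ 2) * (6 + 4 * (3 * u) + (3 * u) ^ 2)) := by positivity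
  linarith

-- The weights make the mixture agree with `sech y` up to order `y⁴`.
noncomputable def sechWeights : Fin 4 → ℝ := ![2 / 9, 2 / 3, 0, 1 / 9]

noncomputable def sechCubeWeights : Fin 10 → ℝ :=
  ![8 / 729, 8 / 81, 8 / 27, 76 / 243, 8 / 81, 4 / 27, 2 / 243, 2 / 81, 0, 1 / 729]

lemma inv_cosh_le_sechWeights (y : ℝ) :
    (cosh y)⁻¹ ≤ ∑ k, sechWeights k * exp (-(y ^ 2 / 2)) ^ (k : ℕ) := by
  set u := y ^ 2 / 2
  have hu : 0 ≤ u := by positivity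
  have hcosh : 1 + u + u ^ 2 / 6 + u ^ 3 / 90 ≤ cosh y := by
    convert taylor_le_cosh y using 1
    ring
  have hexp3 : exp (-(3 * u)) = exp (-u) ^ 3 := by
    rw [← exp_nat_mul]
    ring_nf
  have h1 := pade_le_exp_neg hu
  have h3 := pade_le_exp_neg (mul_nonneg zero_le_three hu)
  rw [hexp3] at h3
  calc (cosh y)⁻¹ ≤ (1 + u + u ^ 2 / 6 + u ^ 3 / 90)⁻¹ := inv_anti₀ (by positivity) hcosh
    _ ≤ _ := inv_taylor_le_pade_mixture hu
    _ ≤ 2 / 9 + 2 / 3 * exp (-u) + 1 / 9 * exp (-u) ^ 3 := by gcongr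
    _ = ∑ k, sechWeights k * exp (-u) ^ (k : ℕ) := by
      simp only [sechWeights, Fin.sum_univ_succ, Fin.sum_univ_zero, Matrix.cons_val_zero,
        Matrix.cons_val_succ, Fin.val_zero, Fin.val_succ]
      ring

lemma inv_cosh_pow_three_le_sechCubeWeights (y : ℝ) :
    (cosh y)⁻¹ ^ 3 ≤ ∑ k, sechCubeWeights k * exp (-(y ^ 2 / 2)) ^ (k : ℕ) := by
  calc (cosh y)⁻¹ ^ 3 ≤ (∑ k, sechWeights k * exp (-(y ^ 2 / 2)) ^ (k : ℕ)) ^ 3 :=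
        pow_le_pow_left₀ (by positivity) (inv_cosh_le_sechWeights y) 3
    _ = _ := by
      simp only [sechWeights, sechCubeWeights, Fin.sum_univ_succ, Fin.sum_univ_zero,
        Matrix.cons_val_zero, Matrix.cons_val_succ, Fin.val_zero, Fin.val_succ]
      ring

lemma integral_cosh_mul_gaussianReal (c : ℝ) :
    ∫ g, cosh (c * g) ∂gaussianReal 0 1 = exp (c ^ 2 / 2) := by
  have hmgf (s : ℝ) : ∫ g, exp (s * g) ∂gaussianReal 0 1 = exp (s ^ 2 / 2) := by
    simpa [mgf] using congrFun (mgf_id_gaussianReal (μ := 0) (v := 1)) s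
  simp_rw [cosh_eq, ← neg_mul]
  rw [integral_div, integral_add (integrable_exp_mul_gaussianReal c)
    (integrable_exp_mul_gaussianReal (-c)), hmgf, hmgf, neg_sq]
  ring

lemma integral_exp_neg_mul_sq_gaussianReal {a : ℝ} (ha : -(1 / 2) < a) :
    ∫ g, exp (-a * g ^ 2) ∂gaussianReal 0 1 = (√(1 + 2 * a))⁻¹ := by
  have hpdf (g : ℝ) : gaussianPDFReal 0 1 g * exp (-a * g ^ 2)
      = (√(2 * π))⁻¹ * exp (-(a + 1 / 2) * g ^ 2) := by
    rw [gaussianPDFReal, NNReal.coe_one, mul_one, sub_zero, mul_assoc, ← exp_add]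
    congr 2
    ring
  rw [integral_gaussianReal_eq_integral_smul one_ne_zero]
  simp_rw [smul_eq_mul, hpdf]
  rw [integral_const_mul, integral_gaussian, sqrt_div pi_pos.le, sqrt_mul zero_le_two,
    show 1 + 2 * a = 2 * (a + 1 / 2) by ring, sqrt_mul zero_le_two]
  have : 0 < √(a + 1 / 2) := sqrt_pos.mpr (by linarith)
  have : 0 < √π := sqrt_pos.mpr pi_pos
  field_simp

lemma integral_exp_neg_sq_pow_gaussianReal (c : ℝ) (k : ℕ) :
    ∫ g, exp (-((c * g) ^ 2 / 2)) ^ k ∂gaussianReal 0 1 = (√(1 + k * c ^ 2))⁻¹ := by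
  have h (g : ℝ) : exp (-((c * g) ^ 2 / 2)) ^ k = exp (-(k * c ^ 2 / 2) * g ^ 2) := by
    rw [← exp_nat_mul]
    ring_nf
  simp_rw [h]
  rw [integral_exp_neg_mul_sq_gaussianReal
    (by linarith [show (0 : ℝ) ≤ k * c ^ 2 / 2 by positivity])]
  ring_nf

lemma inv_sqrt_one_add_le {u : ℝ} (hu : 0 ≤ u) : (√(1 + u))⁻¹ ≤ (4 + u) / (4 + 3 * u) := by
  refine inv_le_of_inv_le₀ (by positivity) ?_
  rw [inv_div, Real.le_sqrt (by positivity) (by positivity), div_pow,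
    div_le_iff₀ (by positivity)]
  nlinarith [pow_nonneg hu 3]

-- `(4 + u) / (4 + 3u)` is the [1/1] Padé approximant of `(1 + u)^(-1/2)`.
noncomputable def padeMixture {m : ℕ} (w : Fin m → ℝ) (t : ℝ) : ℝ :=
  ∑ k, w k * ((4 + k * t) / (4 + 3 * (k * t)))

lemma integral_inv_cosh_pow_le_padeMixture {m : ℕ} {w : Fin m → ℝ} (hw : ∀ k, 0 ≤ w k) {n : ℕ}
    (hbound : ∀ y, (cosh y)⁻¹ ^ n ≤ ∑ k, w k * exp (-(y ^ 2 / 2)) ^ (k : ℕ)) (c : ℝ) :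
    ∫ g, (cosh (c * g))⁻¹ ^ n ∂gaussianReal 0 1 ≤ padeMixture w (c ^ 2) := by
  have hint (k : ℕ) : Integrable (fun g => exp (-((c * g) ^ 2 / 2)) ^ k) (gaussianReal 0 1) :=
    .of_bound (by fun_prop) 1 (ae_of_all _ fun g => by
      rw [norm_pow, norm_of_nonneg (exp_pos _).le]
      exact pow_le_one₀ (exp_pos _).le (exp_le_one_iff.mpr (by nlinarith [sq_nonneg (c * g)])))
  have hsech : Integrable (fun g => (cosh (c * g))⁻¹ ^ n) (gaussianReal 0 1) :=
    .of_bound (by fun_prop) 1 (ae_of_all _ fun g => by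
      rw [norm_pow, norm_of_nonneg (by positivity)]
      exact pow_le_one₀ (by positivity) (inv_le_one_of_one_le₀ (one_le_cosh _)))
  calc ∫ g, (cosh (c * g))⁻¹ ^ n ∂gaussianReal 0 1
      ≤ ∫ g, ∑ k, w k * exp (-((c * g) ^ 2 / 2)) ^ (k : ℕ) ∂gaussianReal 0 1 :=
        integral_mono hsech
          (integrable_finsetSum _ fun (k : Fin m) _ => (hint k).const_mul (w k))
          fun g => hbound (c * g)
    _ = ∑ k, w k * (√(1 + k * c ^ 2))⁻¹ := by
        rw [integral_finsetSum _ fun (k : Fin m) _ => (hint k).const_mul (w k)]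
        simp_rw [integral_const_mul, integral_exp_neg_sq_pow_gaussianReal]
    _ ≤ padeMixture w (c ^ 2) :=
        Finset.sum_le_sum fun k _ =>
          mul_le_mul_of_nonneg_left (inv_sqrt_one_add_le (by positivity)) (hw k)

open Nat in
lemma expTaylor_sub_padeMixture_pos {t : ℝ} (ht : 0 < t) :
    0 < (1 + 2 * t) * (∑ i ∈ Finset.range 6, (t / 2) ^ i / i !)
      - (1 + 2 * t) * padeMixture sechWeights t
      - (t + 3 * t ^ 2) * padeMixture sechCubeWeights t := by
  have hpos : 0 < t ^ 3 * (6717440 + 200744960 * t + 2442110976 * t ^ 2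
      + 15674018816 * t ^ 3 + 57482669184 * t ^ 4 + 122045168736 * t ^ 5
      + 146225828232 * t ^ 6 + 94944341484 * t ^ 7 + 32898006306 * t ^ 8
      + 4761704799 * t ^ 9 + 524729097 * t ^ 10 + 37200870 * t ^ 11)
      / (240 * ((4 + 3 * t) * (4 + 6 * t) * (4 + 9 * t) * (4 + 12 * t) * (4 + 15 * t)
        * (4 + 18 * t) * (4 + 21 * t) * (4 + 27 * t))) := by positivity
  convert hpos using 1
  simp only [padeMixture, sechWeights, sechCubeWeights, Fin.sum_univ_succ, Fin.sum_univ_zero,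
    Matrix.cons_val_zero, Matrix.cons_val_succ, Fin.val_zero, Fin.val_succ, Finset.sum_range_succ,
    Finset.sum_range_zero, Nat.factorial, Nat.cast_add, Nat.cast_one, Nat.cast_zero, Nat.cast_mul]
  field_simp
  ring

theorem stmt_14_general (β : ℝ) (hβ : 0 < β) (x : ℝ) (hx0 : 0 < x) :
    gaussA β 1 x - gaussA β (-1) x - 2 * β ^ 2 * x * gaussA β (-1) x
      + 2 * β ^ 2 * x *
        (2 * gaussA β 1 x - gaussA β (-1) x - gaussA β (-3) x
          - 6 * β ^ 2 * x * gaussA β (-3) x) > 0 := by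
  set c := √(2 * β ^ 2 * x)
  have hc : c ^ 2 = 2 * β ^ 2 * x := sq_sqrt (by positivity)
  have ht : 0 < c ^ 2 := by rw [hc]; positivity
  have h_one : gaussA β 1 x = exp (c ^ 2 / 2) := by
    simpa [gaussA] using integral_cosh_mul_gaussianReal c
  have ha_neg (n : ℕ) : gaussA β (-n) x = ∫ g, (cosh (c * g))⁻¹ ^ n ∂gaussianReal 0 1 := by
    simp only [gaussA, zpow_neg, zpow_natCast, inv_pow, c]
  have h_neg_one : gaussA β (-1) x ≤ padeMixture sechWeights (c ^ 2) := by
    simpa using ha_neg 1 ▸ integral_inv_cosh_pow_le_padeMixture (n := 1)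
      (fun k => by fin_cases k <;> norm_num [sechWeights])
      (fun y => by simpa using inv_cosh_le_sechWeights y) c
  have h_neg_three : gaussA β (-3) x ≤ padeMixture sechCubeWeights (c ^ 2) :=
    ha_neg 3 ▸ integral_inv_cosh_pow_le_padeMixture
      (fun k => by fin_cases k <;> norm_num [sechCubeWeights])
      inv_cosh_pow_three_le_sechCubeWeights c
  have hexp := sum_le_exp_of_nonneg (half_pos ht).le 6
  rw [show 6 * β ^ 2 * x = 3 * c ^ 2 by rw [hc]; ring, ← hc, h_one]
  linear_combination (1 + 2 * c ^ 2) * hexp + (1 + 2 * c ^ 2) * h_neg_one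
    + (c ^ 2 + 3 * c ^ 4) * h_neg_three + expTaylor_sub_padeMixture_pos ht

theorem stmt_14 (β : ℝ) (hβ : 0 < β) (x : ℝ) (hx0 : 0 < x) (hx1 : x ≤ 1) :
    gaussA β 1 x - gaussA β (-1) x - 2 * β ^ 2 * x * gaussA β (-1) x
      + 2 * β ^ 2 * x *
        (2 * gaussA β 1 x - gaussA β (-1) x - gaussA β (-3) x
          - 6 * β ^ 2 * x * gaussA β (-3) x) > 0 :=
  stmt_14_general β hβ x hx0
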